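/- Let p be a prime, d ≥ 1, r ≥ 0, and A = 𝔽_p⟨X_1,…,X_d⟩. Let ρ_1,…,ρ_r be nonzero homogeneous elements of A of degree 2 and, for each n ≥ 1, let x_n be a nonzero homogeneous element of A of degree n + 2. Assume that the family of highest terms {ρ̂_1,…,ρ̂_r} ∪ {x̂_n : n ≥ 1} is combinatorially free. Let C be the two-sided ideal of A generated by ρ_1,…,ρ_r and all x_n, and set b_n = dim_{𝔽_p}(A^{(n)}/(C ∩ A^{(n)})). Then (∑_{n≥0} b_n t^n) · (1 − d·t + r·t² + ∑_{k≥3} t^k) = 1 in ℤ⟦t⟧; equivalently, the Poincaré series of A/C equals (1 − dt + rt² + t³(1 + t + t² + ⋯))^{−1}. -/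

import Mathlib

noncomputable section

/-- Words in the letters `X_1, …, X_d`: elements of the free monoid on `d` letters,
the letter `X_i` being encoded by `(i - 1 : Fin d)`. -/
abbrev Word (d : ℕ) := FreeMonoid (Fin d)

/-- The free noncommutative polynomial algebra `A = 𝔽_p⟨X_1, …, X_d⟩`, modelled as
the monoid algebra over `ZMod p` of the free monoid on `d` letters. -/
abbrev FA (p d : ℕ) := MonoidAlgebra (ZMod p) (Word d)

/-- The homogeneous component `A^{(n)}`: the `𝔽_p`-span of the monomials (words) of
degree `n`. -/
def homComponent (p d n : ℕ) : Submodule (ZMod p) (FA p d) :=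
  Submodule.span (ZMod p)
    {x | ∃ w : Word d, (FreeMonoid.toList w).length = n ∧ x = MonoidAlgebra.single w 1}

/-- The two-sided ideal of `A` generated by a set `G`: the `𝔽_p`-span of all products
`a * g * b` with `g ∈ G`. -/
def twoSidedSpan (p d : ℕ) (G : Set (FA p d)) : Submodule (ZMod p) (FA p d) :=
  Submodule.span (ZMod p) {x | ∃ a g b : FA p d, g ∈ G ∧ x = a * g * b}

/-- `dim_{𝔽_p} (A^{(n)} / (C ∩ A^{(n)}))`. -/
def bcoef (p d : ℕ) (C : Submodule (ZMod p) (FA p d)) (n : ℕ) : ℕ :=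
  Module.finrank (ZMod p)
    (↥(homComponent p d n) ⧸ (C.comap (homComponent p d n).subtype))

/-- The augmentation ideal `A₁` of `A`: the elements with zero constant term. -/
def augIdeal (p d : ℕ) : Submodule (ZMod p) (FA p d) where
  carrier := {f | f.coeff 1 = 0}
  add_mem' := by
    intro a b ha hb
    simp only [Set.mem_setOf_eq] at *
    show (a + b).coeff 1 = 0
    rw [MonoidAlgebra.coeff_add, Finsupp.add_apply, ha, hb, add_zero]
  zero_mem' := rfl
  smul_mem' := by
    intro c f hf
    simp only [Set.mem_setOf_eq] at *
    show (c • f).coeff 1 = 0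
    rw [MonoidAlgebra.coeff_smul_apply, hf, smul_zero]

/-- `w` is the highest term `Ẑ` of `Z`: it lies in the support of `Z` and is
(lexicographically, for `X_1 < X_2 < ⋯ < X_d`) greater than every other word in the
support of `Z`. -/
def IsHighestTerm (p d : ℕ) (Z : FA p d) (w : Word d) : Prop :=
  w ∈ Z.coeff.support ∧
    ∀ w' ∈ Z.coeff.support, w' ≠ w →
      List.Lex (· < ·) (FreeMonoid.toList w') (FreeMonoid.toList w)

/-- An indexed family of pairwise distinct words is *combinatorially free* if (i) no
word of the family is a factor (submonomial) of another word of the family, and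
(ii) for any two words `w, w'` of the family, no nonempty proper suffix of `w` equals
a nonempty proper prefix of `w'`.  (For `i ≠ j` the words `w i` and `w j` must be
distinct, since any word is a factor of itself.) -/
def CombFreeFam {α I : Type*} (w : I → List α) : Prop :=
  (∀ i j : I, i ≠ j → ¬ w i <:+: w j) ∧
  (∀ i j : I, ∀ s : List α,
      s ≠ [] → s <:+ w i → s ≠ w i → s <+: w j → s ≠ w j → False)


namespace Stmt10

open FreeMonoid
open scoped Classical

/-- Base-`d` value of a word (big-endian). -/
def val (d : ℕ) : List (Fin d) → ℕ
  | [] => 0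
  | a :: t => a.1 * d ^ t.length + val d t

lemma val_lt_pow (d : ℕ) : ∀ w : List (Fin d), val d w < d ^ w.length
  | [] => by simp [val]
  | a :: t => by
    have h1 : val d t < d ^ t.length := val_lt_pow d t
    have h2 : a.1 + 1 ≤ d := a.2
    calc a.1 * d ^ t.length + val d t < a.1 * d ^ t.length + d ^ t.length := by omega
      _ = (a.1 + 1) * d ^ t.length := by ring
      _ ≤ d * d ^ t.length := Nat.mul_le_mul_right _ h2
      _ = d ^ (t.length + 1) := by ring
      _ = d ^ (a :: t).length := by simp

lemma val_append (d : ℕ) : ∀ u v : List (Fin d),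
    val d (u ++ v) = val d u * d ^ v.length + val d v
  | [], v => by simp [val]
  | a :: t, v => by
    show a.1 * d ^ (t ++ v).length + val d (t ++ v) = _
    rw [val_append d t v, List.length_append]
    show _ = (a.1 * d ^ t.length + val d t) * d ^ v.length + val d v
    ring

lemma lex_val {d : ℕ} : ∀ {w w' : List (Fin d)}, w.length = w'.length →
    List.Lex (· < ·) w w' → val d w < val d w'
  | [], _, hl, h => by
    cases h
    · simp at hl
  | a :: t, [], hl, h => by cases h
  | a :: t, a' :: t', hl, h => by
    simp only [List.length_cons, Nat.add_right_cancel_iff] at hl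
    cases h with
    | cons h =>
      have := lex_val hl h
      simp only [val, hl]
      omega
    | rel hab =>
      have h1 : val d t < d ^ t.length := val_lt_pow d t
      have h2 : a.1 + 1 ≤ a'.1 := hab
      simp only [val, hl]
      calc a.1 * d ^ t'.length + val d t < a.1 * d ^ t'.length + d ^ t'.length := by
            rw [← hl]; omega
        _ = (a.1 + 1) * d ^ t'.length := by ring
        _ ≤ a'.1 * d ^ t'.length := Nat.mul_le_mul_right _ h2
        _ ≤ a'.1 * d ^ t'.length + val d t' := Nat.le_add_right _ _

lemma val_middle_lt {d : ℕ} {t f : List (Fin d)} (u v : List (Fin d))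
    (hl : t.length = f.length) (hv : val d t < val d f) :
    val d (u ++ t ++ v) < val d (u ++ f ++ v) := by
  rw [List.append_assoc, List.append_assoc, val_append d u (t ++ v),
    val_append d u (f ++ v), val_append d t v, val_append d f v]
  simp only [List.length_append, hl]
  have key : val d t * d ^ v.length + d ^ v.length ≤ val d f * d ^ v.length := by
    calc val d t * d ^ v.length + d ^ v.length = (val d t + 1) * d ^ v.length := by ring
      _ ≤ val d f * d ^ v.length := Nat.mul_le_mul_right _ hv
  have hvlt := val_lt_pow d v
  omega

section Occ

variable {α : Type*} {I : Type*} {F : I → List α}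

/-- Two occurrences of family words in the same word, the first starting no later
than the second, are equal or disjoint. -/
lemma occ_helper (hcf : CombFreeFam F) {i j : I} {u v u' v' : List α}
    (h : u ++ F i ++ v = u' ++ F j ++ v') (hk : u.length ≤ u'.length) :
    (i = j ∧ u = u' ∧ v = v') ∨ (∃ m, u' = u ++ F i ++ m ∧ v = m ++ F j ++ v') := by
  rcases le_or_gt (u.length + (F i).length) u'.length with hB | hB
  · -- disjoint
    right
    have hw1 : (u ++ F i) <+: (u ++ F i ++ v) := ⟨v, rfl⟩
    have hw2 : u' <+: (u ++ F i ++ v) := ⟨F j ++ v', by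
      rw [← List.append_assoc]; exact h.symm⟩
    have hpre : (u ++ F i) <+: u' :=
      List.prefix_of_prefix_length_le hw1 hw2 (by simp only [List.length_append]; omega)
    obtain ⟨m, hm⟩ := hpre
    subst hm
    refine ⟨m, rfl, ?_⟩
    simp only [List.append_assoc] at h
    have h1 := List.append_cancel_left h
    have h2 := List.append_cancel_left h1
    rw [h2, List.append_assoc]
  · -- u ≤ u' < u + |F i|
    have hw1 : u <+: (u ++ F i ++ v) := ⟨F i ++ v, by rw [List.append_assoc]⟩
    have hw2 : u' <+: (u ++ F i ++ v) := ⟨F j ++ v', by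
      rw [← List.append_assoc]; exact h.symm⟩
    have hpre1 : u <+: u' := List.prefix_of_prefix_length_le hw1 hw2 hk
    obtain ⟨s₁, hs₁⟩ := hpre1
    subst hs₁
    have heq1 : F i ++ v = s₁ ++ (F j ++ v') := by
      have h' := h
      simp only [List.append_assoc] at h'
      exact List.append_cancel_left h'
    have hs₁len : s₁.length < (F i).length := by
      have := congrArg List.length (List.append_assoc u s₁ (F j ++ v'))
      simp only [List.length_append] at hB hk ⊢
      omega
    have hs₁pre : s₁ <+: F i :=
      List.prefix_of_prefix_length_le ⟨F j ++ v', heq1.symm⟩ ⟨v, rfl⟩ hs₁len.le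
    obtain ⟨s₂, hs₂⟩ := hs₁pre
    have heq2 : s₂ ++ v = F j ++ v' := by
      rw [← hs₂] at heq1
      simp only [List.append_assoc] at heq1
      exact List.append_cancel_left heq1
    have hs₂len : s₁.length + s₂.length = (F i).length := by
      have := congrArg List.length hs₂; simpa using this
    rcases le_or_gt (F j).length s₂.length with hA | hC
    · -- F j inside F i
      have hFjpre : F j <+: s₂ :=
        List.prefix_of_prefix_length_le ⟨v', heq2.symm⟩ ⟨v, rfl⟩ hA
      obtain ⟨s₃, hs₃⟩ := hFjpre
      have hinf : F j <:+: F i := ⟨s₁, s₃, by rw [← hs₂, ← hs₃, List.append_assoc]⟩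
      by_cases hij : i = j
      · subst hij
        have hlen3 : s₁.length = 0 ∧ s₃.length = 0 := by
          have h3 := congrArg List.length hs₃
          simp only [List.length_append] at h3
          omega
        have hs1nil : s₁ = [] := List.length_eq_zero_iff.mp hlen3.1
        subst hs1nil
        left
        refine ⟨rfl, by simp, ?_⟩
        simp only [List.nil_append] at hs₂ heq1
        rw [← hs₂] at heq1
        exact List.append_cancel_left heq1
      · exact absurd hinf (hcf.1 j i (Ne.symm hij))
    · -- proper overlap
      exfalso
      have hs₂pre : s₂ <+: F j :=
        List.prefix_of_prefix_length_le ⟨v, heq2⟩ ⟨v', rfl⟩ hC.le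
      have hs₂suf : s₂ <:+ F i := ⟨s₁, hs₂⟩
      have hs₂ne : s₂ ≠ [] := by
        intro hnil
        rw [hnil] at hs₂len
        simp at hs₂len
        omega
      have hs₂neFj : s₂ ≠ F j := by
        intro hfj
        rw [hfj] at hC
        omega
      by_cases hs1 : s₁ = []
      · subst hs1
        simp only [List.nil_append] at hs₂ hs₂len
        subst hs₂
        by_cases hij : i = j
        · subst hij; omega
        · exact hcf.1 i j hij hs₂pre.isInfix
      · have hs₂neFi : s₂ ≠ F i := by
          intro hfi
          rw [hfi] at hs₂len
          have : s₁.length = 0 := by omega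
          exact hs1 (List.length_eq_zero_iff.mp this)
        exact hcf.2 i j s₂ hs₂ne hs₂suf hs₂neFi hs₂pre hs₂neFj

/-- Full case analysis for two occurrences. -/
lemma occ_cases (hcf : CombFreeFam F) {i j : I} {u v u' v' : List α}
    (h : u ++ F i ++ v = u' ++ F j ++ v') :
    (i = j ∧ u = u' ∧ v = v') ∨ (∃ m, u' = u ++ F i ++ m ∧ v = m ++ F j ++ v')
      ∨ (∃ m, u = u' ++ F j ++ m ∧ v' = m ++ F i ++ v) := by
  rcases le_total u.length u'.length with hk | hk
  · rcases occ_helper hcf h hk with h1 | h2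
    · exact Or.inl h1
    · exact Or.inr (Or.inl h2)
  · rcases occ_helper hcf h.symm hk with h1 | h2
    · exact Or.inl ⟨h1.1.symm, h1.2.1.symm, h1.2.2.symm⟩
    · exact Or.inr (Or.inr h2)

end Occ

variable {p d : ℕ} {I : Type*}

/-- single of a word given as a list -/
noncomputable def sing (p : ℕ) {d : ℕ} (w : List (Fin d)) : FA p d := MonoidAlgebra.single (ofList w) 1

/-- truncated tail of `T i`: only the part supported on words of the same length as
`F i` and of smaller value -/
noncomputable def ftail (F : I → List (Fin d)) (T : I → FA p d) (i : I) : FA p d :=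
  MonoidAlgebra.ofCoeff (Finsupp.filter
    (fun w => (toList w).length = (F i).length ∧ val d (toList w) < val d (F i)) (T i).coeff)

lemma mem_support_ftail {F : I → List (Fin d)} {T : I → FA p d} {i : I} {w : Word d}
    (h : w ∈ (ftail F T i).coeff.support) :
    w ∈ (T i).coeff.support ∧ (toList w).length = (F i).length ∧
      val d (toList w) < val d (F i) := by
  rw [ftail, MonoidAlgebra.coeff_ofCoeff, Finsupp.support_filter, Finset.mem_filter] at h
  exact ⟨h.1, h.2⟩

/-- `w` contains an occurrence of a forbidden word -/
def HasOcc (F : I → List (Fin d)) (w : List (Fin d)) : Prop := ∃ i u v, w = u ++ F i ++ v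

/-- the normal form of a word -/
noncomputable def Nw (F : I → List (Fin d)) (T : I → FA p d) (w : List (Fin d)) :
    FA p d :=
  if h : HasOcc F w then
    ∑ t ∈ (ftail F T h.choose).coeff.support.attach,
      (ftail F T h.choose).coeff t.1 •
        Nw F T (h.choose_spec.choose ++ toList t.1 ++ h.choose_spec.choose_spec.choose)
  else sing p w
termination_by val d w
decreasing_by
  have hw := h.choose_spec.choose_spec.choose_spec
  have ht := mem_support_ftail t.2
  have h2 := val_middle_lt h.choose_spec.choose h.choose_spec.choose_spec.choose
    ht.2.1 ht.2.2
  exact lt_of_lt_of_eq h2 (congrArg (val d) hw.symm)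

lemma Nw_unfold (F : I → List (Fin d)) (T : I → FA p d) {w : List (Fin d)}
    (h : HasOcc F w) :
    ∃ (j : I) (u' v' : List (Fin d)), w = u' ++ F j ++ v' ∧
      Nw F T w = (ftail F T j).coeff.sum fun t c => c • Nw F T (u' ++ toList t ++ v') := by
  refine ⟨h.choose, h.choose_spec.choose, h.choose_spec.choose_spec.choose,
    h.choose_spec.choose_spec.choose_spec, ?_⟩
  rw [Nw.eq_def, dif_pos h]
  exact Finset.sum_attach ((ftail F T h.choose).coeff.support)
    (fun t => (ftail F T h.choose).coeff t •
      Nw F T (h.choose_spec.choose ++ toList t ++ h.choose_spec.choose_spec.choose))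

lemma Nw_good (F : I → List (Fin d)) (T : I → FA p d) {w : List (Fin d)}
    (h : ¬ HasOcc F w) : Nw F T w = sing p w := by
  rw [Nw.eq_def, dif_neg h]

lemma sum_swap_smul (f g : FA p d) (φ : Word d → Word d → FA p d) :
    (f.coeff.sum fun t c => c • g.coeff.sum fun s e => e • φ t s)
      = g.coeff.sum fun s e => e • f.coeff.sum fun t c => c • φ t s := by
  simp only [Finsupp.sum, Finset.smul_sum]
  rw [Finset.sum_comm]
  exact Finset.sum_congr rfl fun t _ => Finset.sum_congr rfl fun s _ => smul_comm _ _ _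

/-- The key confluence lemma: reducing at any marked occurrence computes `Nw`. -/
lemma Nw_occ {F : I → List (Fin d)} (T : I → FA p d) (hcf : CombFreeFam F)
    (u : List (Fin d)) (i : I) (v : List (Fin d)) :
    Nw F T (u ++ F i ++ v) =
      (ftail F T i).coeff.sum fun t c => c • Nw F T (u ++ toList t ++ v) := by
  suffices H : ∀ N u i v, val d (u ++ F i ++ v) < N →
      Nw F T (u ++ F i ++ v) =
        (ftail F T i).coeff.sum fun t c => c • Nw F T (u ++ toList t ++ v) by
    exact H (val d (u ++ F i ++ v) + 1) u i v (Nat.lt_succ_self _)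
  intro N
  induction N with
  | zero => intro u i v h; omega
  | succ N IH =>
    intro u i v hval
    have hocc : HasOcc F (u ++ F i ++ v) := ⟨i, u, v, rfl⟩
    obtain ⟨j, u', v', hw, hunf⟩ := Nw_unfold F T hocc
    rw [hunf]
    rcases occ_cases hcf hw with ⟨hij, huu, hvv⟩ | ⟨m, hm1, hm2⟩ | ⟨m, hm1, hm2⟩
    · subst hij; subst huu; subst hvv; rfl
    · -- chosen occurrence strictly to the right: u' = u ++ F i ++ m, v = m ++ F j ++ v'
      have hval' : val d (u ++ F i ++ v) ≤ N := Nat.lt_succ_iff.mp hval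
      -- LHS
      have lhs_eq : ((ftail F T j).coeff.sum fun s e => e • Nw F T (u' ++ toList s ++ v'))
          = (ftail F T j).coeff.sum fun s e =>
              e • ((ftail F T i).coeff.sum fun t c =>
                c • Nw F T (u ++ toList t ++ (m ++ toList s ++ v'))) := by
        refine Finsupp.sum_congr fun s hs => ?_
        have hsmem := mem_support_ftail hs
        have harg : u' ++ toList s ++ v' = u ++ F i ++ (m ++ toList s ++ v') := by
          rw [hm1]; simp [List.append_assoc]
        have hlt : val d (u ++ F i ++ (m ++ toList s ++ v')) < N := by
          calc val d (u ++ F i ++ (m ++ toList s ++ v'))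
              < val d (u ++ F i ++ (m ++ F j ++ v')) := by
                have := val_middle_lt (u ++ F i ++ m) v' hsmem.2.1 hsmem.2.2
                simpa [List.append_assoc] using this
            _ = val d (u ++ F i ++ v) := by rw [hm2]
            _ ≤ N := hval'
        rw [harg, IH u i (m ++ toList s ++ v') hlt]
      -- RHS
      have rhs_eq : ((ftail F T i).coeff.sum fun t c => c • Nw F T (u ++ toList t ++ v))
          = (ftail F T i).coeff.sum fun t c =>
              c • ((ftail F T j).coeff.sum fun s e =>
                e • Nw F T (u ++ toList t ++ (m ++ toList s ++ v'))) := by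
        refine Finsupp.sum_congr fun t ht => ?_
        have htmem := mem_support_ftail ht
        have harg : u ++ toList t ++ v = (u ++ toList t ++ m) ++ F j ++ v' := by
          rw [hm2]; simp [List.append_assoc]
        have hlt : val d ((u ++ toList t ++ m) ++ F j ++ v') < N := by
          calc val d ((u ++ toList t ++ m) ++ F j ++ v')
              < val d (u ++ F i ++ v) := by
                rw [hm2]
                have := val_middle_lt u (m ++ F j ++ v') htmem.2.1 htmem.2.2
                simpa [List.append_assoc] using this
            _ ≤ N := hval'
        rw [harg, IH (u ++ toList t ++ m) j v' hlt]
        simp only [List.append_assoc]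
      rw [lhs_eq, rhs_eq, sum_swap_smul]
    · -- chosen occurrence strictly to the left: u = u' ++ F j ++ m, v' = m ++ F i ++ v
      have hval' : val d (u ++ F i ++ v) ≤ N := Nat.lt_succ_iff.mp hval
      have lhs_eq : ((ftail F T j).coeff.sum fun s e => e • Nw F T (u' ++ toList s ++ v'))
          = (ftail F T j).coeff.sum fun s e =>
              e • ((ftail F T i).coeff.sum fun t c =>
                c • Nw F T ((u' ++ toList s ++ m) ++ toList t ++ v)) := by
        refine Finsupp.sum_congr fun s hs => ?_
        have hsmem := mem_support_ftail hs
        have harg : u' ++ toList s ++ v' = (u' ++ toList s ++ m) ++ F i ++ v := by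
          rw [hm2]; simp [List.append_assoc]
        have hlt : val d ((u' ++ toList s ++ m) ++ F i ++ v) < N := by
          calc val d ((u' ++ toList s ++ m) ++ F i ++ v)
              < val d ((u' ++ F j ++ m) ++ F i ++ v) := by
                have := val_middle_lt u' (m ++ F i ++ v) hsmem.2.1 hsmem.2.2
                simpa [List.append_assoc] using this
            _ = val d (u ++ F i ++ v) := by rw [hm1]
            _ ≤ N := hval'
        rw [harg, IH (u' ++ toList s ++ m) i v hlt]
      have rhs_eq : ((ftail F T i).coeff.sum fun t c => c • Nw F T (u ++ toList t ++ v))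
          = (ftail F T i).coeff.sum fun t c =>
              c • ((ftail F T j).coeff.sum fun s e =>
                e • Nw F T ((u' ++ toList s ++ m) ++ toList t ++ v)) := by
        refine Finsupp.sum_congr fun t ht => ?_
        have htmem := mem_support_ftail ht
        have harg : u ++ toList t ++ v = u' ++ F j ++ (m ++ toList t ++ v) := by
          rw [hm1]; simp [List.append_assoc]
        have hlt : val d (u' ++ F j ++ (m ++ toList t ++ v)) < N := by
          calc val d (u' ++ F j ++ (m ++ toList t ++ v))
              < val d (u' ++ F j ++ (m ++ F i ++ v)) := by
                have := val_middle_lt (u' ++ F j ++ m) v htmem.2.1 htmem.2.2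
                simpa [List.append_assoc] using this
            _ = val d (u ++ F i ++ v) := by rw [hm1]; simp [List.append_assoc]
            _ ≤ N := hval'
        rw [harg, IH u' j (m ++ toList t ++ v) hlt]
        simp only [List.append_assoc]
      rw [lhs_eq, rhs_eq, sum_swap_smul]

-- ###################### part 3 ######################

lemma sing_append (u v : List (Fin d)) : sing p (u ++ v) = sing p u * sing p v := by
  rw [sing, sing, sing, MonoidAlgebra.single_mul_single, one_mul, ofList_append]

lemma single_eq_smul_sing (w : Word d) (c : ZMod p) :
    MonoidAlgebra.single w c = c • sing p (toList w) := by
  rw [sing, ofList_toList, MonoidAlgebra.smul_single', mul_one]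

/-- the normal form as a linear map -/
noncomputable def NA (F : I → List (Fin d)) (T : I → FA p d) :
    FA p d →ₗ[ZMod p] FA p d :=
  (Finsupp.linearCombination (ZMod p) (fun w : Word d => Nw F T (toList w))).comp
    (MonoidAlgebra.coeffLinearEquiv (ZMod p)).toLinearMap

lemma NA_single (F : I → List (Fin d)) (T : I → FA p d) (w : Word d) (c : ZMod p) :
    NA F T (MonoidAlgebra.single w c) = c • Nw F T (toList w) :=
  Finsupp.linearCombination_single (ZMod p) c w

lemma NA_sing (F : I → List (Fin d)) (T : I → FA p d) (w : List (Fin d)) :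
    NA F T (sing p w) = Nw F T w := by
  rw [sing, NA_single, toList_ofList, one_smul]

lemma NA_apply (F : I → List (Fin d)) (T : I → FA p d) (h : FA p d) :
    NA F T h = h.coeff.sum fun w c => c • Nw F T (toList w) :=
  Finsupp.linearCombination_apply _ _

lemma mulExpand (u v : List (Fin d)) (h : FA p d) :
    sing p u * h * sing p v = h.coeff.sum fun w c => c • sing p (u ++ toList w ++ v) := by
  induction h using MonoidAlgebra.induction_linear with
  | zero => simp
  | add f h hf hh =>
    rw [mul_add, add_mul, hf, hh, MonoidAlgebra.coeff_add,
      Finsupp.sum_add_index' (fun w => by simp) (fun w c c' => add_smul c c' _)]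
  | single w c =>
    rw [MonoidAlgebra.coeff_single, Finsupp.sum_single_index (by simp)]
    simp only [sing, MonoidAlgebra.single_mul_single, one_mul, mul_one,
      ofList_append, ofList_toList]
    rw [MonoidAlgebra.smul_single', mul_one]

lemma NA_mul (F : I → List (Fin d)) (T : I → FA p d) (u v : List (Fin d)) (h : FA p d) :
    NA F T (sing p u * h * sing p v) =
      h.coeff.sum fun w c => c • Nw F T (u ++ toList w ++ v) := by
  rw [mulExpand, map_finsuppSum]
  refine Finsupp.sum_congr fun w hw => ?_
  rw [map_smul, NA_sing]

lemma NA_tail {F : I → List (Fin d)} (T : I → FA p d) (hcf : CombFreeFam F)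
    (u v : List (Fin d)) (i : I) :
    NA F T (sing p u * (sing p (F i) - ftail F T i) * sing p v) = 0 := by
  rw [mul_sub, sub_mul, map_sub]
  rw [← sing_append, ← sing_append, NA_sing, Nw_occ T hcf, NA_mul, sub_self]

-- ###################### part 4 ######################

section Inst

variable [hpp : Fact p.Prime]
variable (F : I → List (Fin d)) (g : I → FA p d)

/-- leading coefficient -/
noncomputable def lc (i : I) : ZMod p := (g i).coeff (ofList (F i))

/-- the (monic, sign-flipped) tail of a generator -/
noncomputable def Tg (i : I) : FA p d := sing p (F i) - (lc F g i)⁻¹ • g i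

lemma fsingle_eq_smul_sing (w : Word d) (c : ZMod p) :
    (MonoidAlgebra.single w c : FA p d) = c • sing p (toList w) := single_eq_smul_sing w c

variable (hlen : ∀ i, ∀ w ∈ (g i).coeff.support, (toList w).length = (F i).length)
variable (hht : ∀ i, IsHighestTerm p d (g i) (ofList (F i)))

include hlen hht in
lemma Tg_support {i : I} {a : Word d} (ha : a ∈ (Tg F g i).coeff.support) :
    (toList a).length = (F i).length ∧ val d (toList a) < val d (F i) := by
  have hlc : lc F g i ≠ 0 := Finsupp.mem_support_iff.mp (hht i).1
  have hval : (Tg F g i).coeff a = (if a = ofList (F i) then (1 : ZMod p) else 0)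
      - (lc F g i)⁻¹ * (g i).coeff a := by
    rw [Tg, MonoidAlgebra.coeff_sub, Finsupp.sub_apply, MonoidAlgebra.coeff_smul,
      Finsupp.smul_apply, smul_eq_mul, sing]
    congr 1
    rw [MonoidAlgebra.coeff_single, Finsupp.single_apply]
    simp [eq_comm]
  have hane : a ≠ ofList (F i) := by
    intro h
    rw [h] at ha hval
    rw [if_pos rfl] at hval
    rw [Finsupp.mem_support_iff, hval] at ha
    refine ha ?_
    show (1 : ZMod p) - (lc F g i)⁻¹ * lc F g i = 0
    rw [inv_mul_cancel₀ hlc, sub_self]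
  have hag : a ∈ (g i).coeff.support := by
    rw [Finsupp.mem_support_iff] at ha ⊢
    intro h0
    rw [hval, if_neg hane, h0, mul_zero, sub_zero] at ha
    exact ha rfl
  have h1 : (toList a).length = (F i).length := hlen i a hag
  refine ⟨h1, ?_⟩
  have hlex := (hht i).2 a hag hane
  rw [toList_ofList] at hlex
  exact lex_val h1 hlex

include hlen hht in
lemma ftail_Tg (i : I) : ftail F (Tg F g) i = Tg F g i := by
  ext a
  rw [ftail, MonoidAlgebra.coeff_ofCoeff, Finsupp.filter_apply]
  split_ifs with hpa
  · rfl
  · by_contra hne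
    have ha : a ∈ (Tg F g i).coeff.support := Finsupp.mem_support_iff.mpr fun h => hne h.symm
    exact hpa (Tg_support F g hlen hht ha)

include hlen hht in
lemma g_eq (i : I) : g i = lc F g i • (sing p (F i) - Tg F g i) := by
  have hlc : lc F g i ≠ 0 := Finsupp.mem_support_iff.mp (hht i).1
  rw [Tg, sub_sub_cancel, smul_smul, mul_inv_cancel₀ hlc, one_smul]

include hlen hht in
lemma NA_sing_g_zero (hcf : CombFreeFam F) (u v : List (Fin d)) (i : I) :
    NA F (Tg F g) (sing p u * g i * sing p v) = 0 := by
  rw [g_eq F g hlen hht i, mul_smul_comm, smul_mul_assoc, map_smul]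
  have := NA_tail (Tg F g) hcf u v i
  rw [ftail_Tg F g hlen hht] at this
  rw [this, smul_zero]

include hlen hht in
lemma NA_g_zero (hcf : CombFreeFam F) (a b : FA p d) (i : I) :
    NA F (Tg F g) (a * g i * b) = 0 := by
  have hb : ∀ (u : List (Fin d)) (b : FA p d), NA F (Tg F g) (sing p u * g i * b) = 0 := by
    intro u b
    induction b using MonoidAlgebra.induction_linear with
    | zero => rw [mul_zero, map_zero]
    | add f h hf hh => rw [mul_add, map_add, hf, hh, add_zero]
    | single w c =>
      rw [fsingle_eq_smul_sing, mul_smul_comm, map_smul,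
        NA_sing_g_zero F g hlen hht hcf, smul_zero]
  induction a using MonoidAlgebra.induction_linear with
  | zero => rw [zero_mul, zero_mul, map_zero]
  | add f h hf hh => rw [add_mul, add_mul, map_add, hf, hh, add_zero]
  | single w c =>
    rw [fsingle_eq_smul_sing, smul_mul_assoc, smul_mul_assoc, map_smul, hb, smul_zero]

include hlen hht in
lemma Nw_sub_mem {G : Set (FA p d)} (hG : ∀ i, g i ∈ G) (hcf : CombFreeFam F)
    (w : List (Fin d)) :
    Nw F (Tg F g) w - sing p w ∈ twoSidedSpan p d G := by
  suffices H : ∀ N w, val d w < N → Nw F (Tg F g) w - sing p w ∈ twoSidedSpan p d G by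
    exact H (val d w + 1) w (Nat.lt_succ_self _)
  intro N
  induction N with
  | zero => intro w h; omega
  | succ N IH =>
    intro w hval
    by_cases h : HasOcc F w
    · obtain ⟨j, u, v, hw, hunf⟩ := Nw_unfold F (Tg F g) h
      subst hw
      rw [hunf]
      have hsum : ((ftail F (Tg F g) j).coeff.sum fun t c => c • Nw F (Tg F g) (u ++ toList t ++ v))
          - ((ftail F (Tg F g) j).coeff.sum fun t c => c • sing p (u ++ toList t ++ v))
          ∈ twoSidedSpan p d G := by
        rw [Finsupp.sum, Finsupp.sum, ← Finset.sum_sub_distrib]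
        refine Submodule.sum_mem _ fun t ht => ?_
        rw [← smul_sub]
        refine Submodule.smul_mem _ _ (IH _ ?_)
        have htm := mem_support_ftail ht
        have := val_middle_lt u v htm.2.1 htm.2.2
        omega
      have hsum2 : ((ftail F (Tg F g) j).coeff.sum fun t c => c • sing p (u ++ toList t ++ v))
          - sing p (u ++ F j ++ v) ∈ twoSidedSpan p d G := by
        rw [← mulExpand, ftail_Tg F g hlen hht, Tg, mul_sub, sub_mul, sing_append,
          sing_append]
        have : sing p u * sing p (F j) * sing p v -
            sing p u * ((lc F g j)⁻¹ • g j) * sing p v -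
            sing p u * sing p (F j) * sing p v
            = -((lc F g j)⁻¹ • (sing p u * g j * sing p v)) := by
          rw [mul_smul_comm, smul_mul_assoc]
          abel
        rw [this]
        refine Submodule.neg_mem _ (Submodule.smul_mem _ _ ?_)
        exact Submodule.subset_span ⟨sing p u, g j, sing p v, hG j, rfl⟩
      have := Submodule.add_mem _ hsum hsum2
      rwa [sub_add_sub_cancel] at this
    · rw [Nw_good _ _ h, sub_self]
      exact Submodule.zero_mem _

lemma Nw_support_good (T : I → FA p d) (w : List (Fin d)) :
    ∀ a ∈ (Nw F T w).coeff.support, (toList a).length = w.length ∧ ¬ HasOcc F (toList a) := by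
  suffices H : ∀ N w, val d w < N → ∀ a ∈ (Nw F T w).coeff.support,
      (toList a).length = w.length ∧ ¬ HasOcc F (toList a) by
    exact H (val d w + 1) w (Nat.lt_succ_self _)
  intro N
  induction N with
  | zero => intro w h; omega
  | succ N IH =>
    intro w hval a ha
    by_cases h : HasOcc F w
    · obtain ⟨j, u, v, hw, hunf⟩ := Nw_unfold F T h
      subst hw
      rw [hunf, MonoidAlgebra.coeff_finsuppSum] at ha
      have hsub := Finsupp.support_sum ha
      rw [Finset.mem_biUnion] at hsub
      obtain ⟨t, ht, hat⟩ := hsub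
      have hat' : a ∈ (Nw F T (u ++ toList t ++ v)).coeff.support :=
        Finsupp.support_smul hat
      have htm := mem_support_ftail ht
      have hlt : val d (u ++ toList t ++ v) < N := by
        have := val_middle_lt u v htm.2.1 htm.2.2
        omega
      have := IH _ hlt a hat'
      refine ⟨?_, this.2⟩
      rw [this.1]
      simp only [List.length_append, htm.2.1]
    · rw [Nw_good _ _ h, sing, MonoidAlgebra.coeff_single] at ha
      have := Finsupp.support_single_subset ha
      rw [Finset.mem_singleton] at this
      subst this
      exact ⟨rfl, h⟩

end Inst

-- ###################### part 5 ######################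

/-- the finset of words of length `n` avoiding all forbidden factors -/
noncomputable def goodFS (F : I → List (Fin d)) (n : ℕ) : Finset (List (Fin d)) :=
  ((Finset.univ : Finset (Fin n → Fin d)).image fun f => List.ofFn f).filter
    (fun w => ¬ HasOcc F w)

lemma mem_goodFS {F : I → List (Fin d)} {n : ℕ} {w : List (Fin d)} :
    w ∈ goodFS F n ↔ w.length = n ∧ ¬ HasOcc F w := by
  rw [goodFS, Finset.mem_filter, Finset.mem_image]
  constructor
  · rintro ⟨⟨f, _, rfl⟩, h2⟩
    exact ⟨List.length_ofFn (f := f), h2⟩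
  · rintro ⟨h1, h2⟩
    subst h1
    exact ⟨⟨fun i => w.get i, Finset.mem_univ _, List.ofFn_get w⟩, h2⟩

lemma mem_homComponent_of_support {n : ℕ} (h : FA p d)
    (hw : ∀ w ∈ h.coeff.support, (toList w).length = n) : h ∈ homComponent p d n := by
  rw [← MonoidAlgebra.sum_coeff_single h]
  refine Submodule.sum_mem _ fun w hwm => ?_
  have : (MonoidAlgebra.single w (h.coeff w) : FA p d) = (h.coeff w) • MonoidAlgebra.single w 1 := by
    rw [MonoidAlgebra.smul_single', mul_one]
  rw [this]
  exact Submodule.smul_mem _ _ (Submodule.subset_span ⟨w, hw w hwm, rfl⟩)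

lemma support_of_mem_homComponent {n : ℕ} {h : FA p d} (hm : h ∈ homComponent p d n) :
    ∀ w ∈ h.coeff.support, (toList w).length = n := by
  induction hm using Submodule.span_induction with
  | mem x hx =>
    obtain ⟨w, hw, rfl⟩ := hx
    intro w' hw'
    rw [MonoidAlgebra.coeff_single] at hw'
    have := Finsupp.support_single_subset hw'
    rw [Finset.mem_singleton] at this
    subst this; exact hw
  | zero => intro w hw; simp at hw
  | add x y _ _ hx hy =>
    intro w hw
    rw [MonoidAlgebra.coeff_add] at hw
    rcases Finset.mem_union.mp (Finsupp.support_add hw) with h | h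
    exacts [hx w h, hy w h]
  | smul c x _ hx =>
    intro w hw
    rw [MonoidAlgebra.coeff_smul] at hw
    exact hx w (Finsupp.support_smul hw)

/-- membership in the span of good singles -/
lemma mem_span_goodsings {S : Set (Word d)} {h : FA p d}
    (hw : ∀ w ∈ h.coeff.support, w ∈ S) :
    h ∈ Submodule.span (ZMod p) ((fun w => (MonoidAlgebra.single w 1 : FA p d)) '' S) := by
  rw [← MonoidAlgebra.sum_coeff_single h]
  refine Submodule.sum_mem _ fun w hwm => ?_
  have : (MonoidAlgebra.single w (h.coeff w) : FA p d) = (h.coeff w) • MonoidAlgebra.single w 1 := by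
    rw [MonoidAlgebra.smul_single', mul_one]
  rw [this]
  exact Submodule.smul_mem _ _ (Submodule.subset_span ⟨w, hw w hwm, rfl⟩)

section DimCalc

variable [hpp : Fact p.Prime] (F : I → List (Fin d)) (g : I → FA p d)
  (hlen : ∀ i, ∀ w ∈ (g i).coeff.support, (toList w).length = (F i).length)
  (hht : ∀ i, IsHighestTerm p d (g i) (ofList (F i)))
  (hcf : CombFreeFam F)
  {G : Set (FA p d)} (hG : ∀ i, g i ∈ G) (hG' : ∀ γ ∈ G, ∃ i, γ = g i)

include hlen hht hcf hG' in
lemma NA_C_zero : ∀ h ∈ twoSidedSpan p d G, NA F (Tg F g) h = 0 := by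
  have hle : twoSidedSpan p d G ≤ LinearMap.ker (NA F (Tg F g)) := by
    rw [twoSidedSpan, Submodule.span_le]
    rintro x ⟨a, γ, b, hγ, rfl⟩
    obtain ⟨i, rfl⟩ := hG' γ hγ
    exact NA_g_zero F g hlen hht hcf a b i
  intro h hmem
  exact hle hmem

include hlen hht hcf hG hG' in
theorem bcoef_eq_card (n : ℕ) :
    bcoef p d (twoSidedSpan p d G) n = (goodFS F n).card := by
  classical
  set C := twoSidedSpan p d G with hC
  set V := homComponent p d n with hV
  -- the key linear map
  set φ : V →ₗ[ZMod p] FA p d := (NA F (Tg F g)).comp V.subtype with hφ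
  have hNAmem : ∀ v : V, (v : FA p d) - NA F (Tg F g) v ∈ C := by
    intro v
    have hrw : (v : FA p d) - NA F (Tg F g) v
        = Finsupp.sum (v : FA p d).coeff
          (fun w c => c • (sing p (toList w) - Nw F (Tg F g) (toList w))) := by
      rw [NA_apply]
      nth_rewrite 1 [← MonoidAlgebra.sum_coeff_single (v : FA p d)]
      rw [← Finsupp.sum_sub]
      refine Finsupp.sum_congr fun w hw => ?_
      rw [smul_sub]
      congr 1
      rw [sing, ofList_toList, MonoidAlgebra.smul_single', mul_one]
    rw [hrw]
    refine Submodule.sum_mem _ fun w hw => Submodule.smul_mem _ _ ?_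
    have h1 := Nw_sub_mem F g hlen hht hG hcf (toList w)
    have h2 := Submodule.neg_mem _ h1
    rwa [neg_sub] at h2
  have hker : LinearMap.ker φ = C.comap V.subtype := by
    ext v
    simp only [LinearMap.mem_ker, Submodule.mem_comap, hφ, LinearMap.comp_apply,
      Submodule.subtype_apply]
    constructor
    · intro h0
      have := hNAmem v
      rwa [h0, sub_zero] at this
    · intro hvc
      exact NA_C_zero F g hlen hht hcf hG' _ hvc
  -- identify the range
  set S : Set (Word d) := {w : Word d | (toList w).length = n ∧ ¬ HasOcc F (toList w)}
    with hS
  have hrange : LinearMap.range φ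
      = Submodule.span (ZMod p) ((fun w => (MonoidAlgebra.single w 1 : FA p d)) '' S) := by
    apply le_antisymm
    · rintro y ⟨v, rfl⟩
      have hv : (NA F (Tg F g)) (v : FA p d) = φ v := rfl
      rw [← hv, NA_apply]
      refine Submodule.sum_mem _ fun w hw => ?_
      refine Submodule.smul_mem _ _ ?_
      refine mem_span_goodsings fun a ha => ?_
      have h2 := Nw_support_good F (Tg F g) (toList w) a ha
      have h3 := support_of_mem_homComponent v.2 w hw
      exact ⟨by rw [h2.1, h3], h2.2⟩
    · rw [Submodule.span_le]
      rintro y ⟨w, hw, rfl⟩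
      have hgood : ¬ HasOcc F (toList w) := hw.2
      have : MonoidAlgebra.single w (1 : ZMod p) ∈ V := by
        apply mem_homComponent_of_support
        intro a ha
        rw [MonoidAlgebra.coeff_single] at ha
        have := Finsupp.support_single_subset ha
        rw [Finset.mem_singleton] at this
        subst this
        exact hw.1
      refine ⟨⟨MonoidAlgebra.single w 1, this⟩, ?_⟩
      show NA F (Tg F g) (MonoidAlgebra.single w 1) = _
      rw [NA_single, Nw_good F (Tg F g) hgood, one_smul, sing, ofList_toList]
  -- the good singles are linearly independent
  haveI hfin : Fintype S := by
    refine Fintype.ofInjective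
      (fun w : S => (⟨toList w.1, by rw [mem_goodFS]; exact w.2⟩ : goodFS F n)) ?_
    intro a b hab
    simp only [Subtype.mk.injEq] at hab
    exact Subtype.ext hab
  have hli : LinearIndependent (ZMod p)
      (fun w : S => (MonoidAlgebra.single (w : Word d) (1 : ZMod p) : FA p d)) := by
    have hb := (MonoidAlgebra.basis (Word d) (ZMod p)).linearIndependent
    have h3 := hb.comp (fun w : S => (w : Word d)) Subtype.val_injective
    simpa [Function.comp_def, MonoidAlgebra.basis_apply] using h3
  have hrange_eq : ((fun w => (MonoidAlgebra.single w (1 : ZMod p) : FA p d)) '' S)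
      = Set.range (fun w : S => (MonoidAlgebra.single (w : Word d) (1 : ZMod p) : FA p d)) :=
    Set.image_eq_range _ S
  have h1 : Module.finrank (ZMod p) (LinearMap.range φ) = Fintype.card S := by
    rw [hrange, hrange_eq]
    exact finrank_span_eq_card hli
  have h2 : Fintype.card S = (goodFS F n).card := by
    rw [← Fintype.card_coe (goodFS F n)]
    refine Fintype.card_congr
      ⟨fun w => ⟨toList w.1, by rw [mem_goodFS]; exact w.2⟩,
       fun w => ⟨ofList w.1, by
        have h4 := mem_goodFS.mp w.2
        exact ⟨h4.1, h4.2⟩⟩, ?_, ?_⟩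
    · intro w; exact Subtype.ext rfl
    · intro w; exact Subtype.ext rfl
  have hquot : (↥V ⧸ C.comap V.subtype) ≃ₗ[ZMod p] LinearMap.range φ :=
    (Submodule.quotEquivOfEq _ _ hker.symm).trans φ.quotKerEquivRange
  have hbc : bcoef p d C n = Module.finrank (ZMod p) (↥V ⧸ C.comap V.subtype) := rfl
  rw [hbc, hquot.finrank_eq, h1, h2]

end DimCalc

-- ###################### part 6 ######################

/-- the finset of forbidden words of length `k` -/
noncomputable def forbFS (F : I → List (Fin d)) (k : ℕ) : Finset (List (Fin d)) :=
  ((Finset.univ : Finset (Fin k → Fin d)).image fun f => List.ofFn f).filter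
    (fun w => ∃ i, F i = w)

lemma mem_forbFS {F : I → List (Fin d)} {k : ℕ} {w : List (Fin d)} :
    w ∈ forbFS F k ↔ w.length = k ∧ ∃ i, F i = w := by
  rw [forbFS, Finset.mem_filter, Finset.mem_image]
  constructor
  · rintro ⟨⟨f, _, rfl⟩, h2⟩
    exact ⟨List.length_ofFn (f := f), h2⟩
  · rintro ⟨h1, h2⟩
    subst h1
    exact ⟨⟨fun i => w.get i, Finset.mem_univ _, List.ofFn_get w⟩, h2⟩

lemma good_of_prefix {F : I → List (Fin d)} {w a : List (Fin d)}
    (hw : ¬ HasOcc F w) (ha : a <+: w) : ¬ HasOcc F a := by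
  rintro ⟨i, x, y, rfl⟩
  obtain ⟨t, rfl⟩ := ha
  exact hw ⟨i, x, y ++ t, by simp [List.append_assoc]⟩

variable (F : I → List (Fin d))

/-- the number of good words of length `n` -/
noncomputable def cN (n : ℕ) : ℕ := (goodFS F n).card

theorem count_rec (hcf : CombFreeFam F) (hne2 : ∀ i, 2 ≤ (F i).length)
    {m : ℕ} (hm : 1 ≤ m) :
    d * cN F (m - 1) = cN F m +
      ∑ k ∈ Finset.Icc 2 m, (forbFS F k).card * cN F (m - k) := by
  classical
  have hne : ∀ i, F i ≠ [] := fun i h => by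
    have := hne2 i; rw [h] at this; simp at this
  -- the middle finset: words of length m whose dropLast is good
  set P : Finset (List (Fin d)) :=
    (((Finset.univ : Finset (Fin m → Fin d)).image fun f => List.ofFn f).filter
      (fun w => ¬ HasOcc F w.dropLast)) with hPdef
  have memP : ∀ {w : List (Fin d)}, w ∈ P ↔ w.length = m ∧ ¬ HasOcc F w.dropLast := by
    intro w
    rw [hPdef, Finset.mem_filter, Finset.mem_image]
    constructor
    · rintro ⟨⟨f, _, rfl⟩, h2⟩
      exact ⟨List.length_ofFn (f := f), h2⟩
    · rintro ⟨h1, h2⟩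
      subst h1
      exact ⟨⟨fun i => w.get i, Finset.mem_univ _, List.ofFn_get w⟩, h2⟩
  have hP' : ((goodFS F (m-1)) ×ˢ (Finset.univ : Finset (Fin d))).card = P.card := by
    refine Finset.card_bij (fun a _ => a.1 ++ [a.2]) ?_ ?_ ?_
    · rintro ⟨w, a⟩ ha
      rw [Finset.mem_product, mem_goodFS] at ha
      rw [memP, List.dropLast_concat]
      constructor
      · rw [List.length_append, ha.1.1]
        simp; omega
      · exact ha.1.2
    · rintro ⟨w₁, a₁⟩ h₁ ⟨w₂, a₂⟩ h₂ heq
      have h3 := List.append_inj' heq rfl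
      have h4 : a₁ = a₂ := by
        have := h3.2
        simpa using this
      rw [Prod.mk.injEq]
      exact ⟨h3.1, h4⟩
    · intro W hW
      rw [memP] at hW
      have hWne : W ≠ [] := by
        intro h; rw [h] at hW; simp at hW; omega
      refine ⟨(W.dropLast, W.getLast hWne), ?_, List.dropLast_append_getLast hWne⟩
      rw [Finset.mem_product, mem_goodFS]
      refine ⟨⟨?_, hW.2⟩, Finset.mem_univ _⟩
      rw [List.length_dropLast, hW.1]
  have hP : d * cN F (m - 1) = P.card := by
    rw [← hP', Finset.card_product, Finset.card_univ, Fintype.card_fin, cN, Nat.mul_comm]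
  have hQ : cN F m + ∑ k ∈ Finset.Icc 2 m, (forbFS F k).card * cN F (m - k)
      = ((goodFS F m).disjSum
          ((Finset.Icc 2 m).sigma fun k => forbFS F k ×ˢ goodFS F (m-k))).card := by
    rw [Finset.card_disjSum, Finset.card_sigma]
    congr 1
    exact Finset.sum_congr rfl fun k _ => (Finset.card_product _ _).symm
  rw [hP, hQ]
  symm
  refine Finset.card_bij (fun a _ => Sum.elim id (fun q => q.2.2 ++ q.2.1) a) ?_ ?_ ?_
  · rintro (w | ⟨k, f, u⟩) ha
    · rw [Finset.inl_mem_disjSum, mem_goodFS] at ha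
      show w ∈ P
      rw [memP]
      exact ⟨ha.1, good_of_prefix ha.2 (List.dropLast_prefix w)⟩
    · rw [Finset.inr_mem_disjSum, Finset.mem_sigma, Finset.mem_product, mem_forbFS,
        mem_goodFS] at ha
      show u ++ f ∈ P
      dsimp only at ha
      obtain ⟨hk, ⟨hf1, i, hfi⟩, hu1, hu2⟩ := ha
      rw [Finset.mem_Icc] at hk
      rw [memP]
      constructor
      · rw [List.length_append, hf1, hu1]; omega
      · subst hfi
        rw [List.dropLast_append_of_ne_nil (hne i)]
        rintro ⟨j, a, b, hab⟩
        have hW : u ++ F i ++ [] = a ++ F j ++ (b ++ [(F i).getLast (hne i)]) := by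
          rw [List.append_nil]
          calc u ++ F i = u ++ ((F i).dropLast ++ [(F i).getLast (hne i)]) := by
                rw [List.dropLast_append_getLast (hne i)]
            _ = a ++ F j ++ (b ++ [(F i).getLast (hne i)]) := by
                rw [← List.append_assoc, hab]
                simp [List.append_assoc]
        rcases occ_cases hcf hW with ⟨hij, huu, hvv⟩ | ⟨m', hm1, hm2⟩ | ⟨m', hm1, hm2⟩
        · exact absurd hvv.symm (by simp)
        · have := congrArg List.length hm2
          simp at this
        · exact hu2 ⟨j, a, m', hm1⟩
  · rintro (w₁ | ⟨k₁, f₁, u₁⟩) h₁ (w₂ | ⟨k₂, f₂, u₂⟩) h₂ heq <;>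
      dsimp only [Sum.elim_inl, Sum.elim_inr, id_eq] at heq
    · rw [heq]
    · -- good vs occurrence: contradiction
      exfalso
      rw [Finset.inl_mem_disjSum, mem_goodFS] at h₁
      rw [Finset.inr_mem_disjSum, Finset.mem_sigma, Finset.mem_product, mem_forbFS] at h₂
      obtain ⟨_, ⟨_, i, hfi⟩, _⟩ := h₂
      exact h₁.2 (heq ▸ ⟨i, u₂, [], by rw [hfi, List.append_nil]⟩)
    · exfalso
      rw [Finset.inl_mem_disjSum, mem_goodFS] at h₂
      rw [Finset.inr_mem_disjSum, Finset.mem_sigma, Finset.mem_product, mem_forbFS] at h₁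
      obtain ⟨_, ⟨_, i, hfi⟩, _⟩ := h₁
      exact h₂.2 (heq ▸ ⟨i, u₁, [], by rw [hfi, List.append_nil]⟩)
    · rw [Finset.inr_mem_disjSum, Finset.mem_sigma, Finset.mem_product, mem_forbFS,
        mem_goodFS] at h₁ h₂
      dsimp only at h₁ h₂
      obtain ⟨hk₁, ⟨hf₁, i, hfi⟩, hu₁, hgu₁⟩ := h₁
      obtain ⟨hk₂, ⟨hf₂, j, hfj⟩, hu₂, hgu₂⟩ := h₂
      have hW : u₁ ++ F i ++ [] = u₂ ++ F j ++ [] := by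
        rw [List.append_nil, List.append_nil, hfi, hfj, heq]
      rcases occ_cases hcf hW with ⟨hij, huu, hvv⟩ | ⟨m', hm1, hm2⟩ | ⟨m', hm1, hm2⟩
      · subst huu
        have hf : f₁ = f₂ := by rw [← hfi, ← hfj, hij]
        subst hf
        have : k₁ = k₂ := by rw [← hf₁, ← hf₂]
        subst this
        rfl
      · exfalso
        have := congrArg List.length hm2
        simp at this
        have := hne2 j
        omega
      · exfalso
        have := congrArg List.length hm2
        simp at this
        have := hne2 i
        omega
  · intro W hW
    rw [memP] at hW
    by_cases hocc : HasOcc F W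
    · obtain ⟨i, x, y, hxy⟩ := hocc
      have hy : y = [] := by
        rcases List.eq_nil_or_concat y with rfl | ⟨y', b, rfl⟩
        · rfl
        · exfalso
          apply hW.2
          have hW' : W.dropLast = x ++ F i ++ y' := by
            rw [hxy]
            simp only [List.concat_eq_append, ← List.append_assoc]
            rw [List.dropLast_concat]
          exact ⟨i, x, y', hW'⟩
      subst hy
      rw [List.append_nil] at hxy
      have hxlen : x.length + (F i).length = m := by
        have := congrArg List.length hxy
        rw [hW.1] at this
        simp at this
        omega
      have hkm : (F i).length ≤ m := by omega
      have hxgood : ¬ HasOcc F x := by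
        refine good_of_prefix hW.2 ?_
        have hx1 : x <+: W := ⟨F i, hxy.symm⟩
        have hx2 : W.dropLast <+: W := List.dropLast_prefix W
        refine List.prefix_of_prefix_length_le hx1 hx2 ?_
        rw [List.length_dropLast, hW.1]
        have := hne2 i
        omega
      refine ⟨Sum.inr ⟨(F i).length, F i, x⟩, ?_, ?_⟩
      · rw [Finset.inr_mem_disjSum, Finset.mem_sigma, Finset.mem_product, mem_forbFS,
          mem_goodFS, Finset.mem_Icc]
        refine ⟨⟨hne2 i, hkm⟩, ⟨rfl, i, rfl⟩, by dsimp only; omega, hxgood⟩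
      · dsimp only [Sum.elim_inr]
        exact hxy.symm
    · refine ⟨Sum.inl W, ?_, rfl⟩
      rw [Finset.inl_mem_disjSum, mem_goodFS]
      exact ⟨hW.1, hocc⟩

lemma cN_zero {F : I → List (Fin d)} (hne2 : ∀ i, 2 ≤ (F i).length) : cN F 0 = 1 := by
  rw [cN]
  have : goodFS F 0 = {[]} := by
    ext w
    rw [mem_goodFS, Finset.mem_singleton]
    constructor
    · rintro ⟨h1, _⟩
      exact List.length_eq_zero_iff.mp h1
    · rintro rfl
      refine ⟨rfl, ?_⟩
      rintro ⟨i, u, v, huv⟩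
      have := congrArg List.length huv
      have := hne2 i
      simp at *
      omega
  rw [this, Finset.card_singleton]

end Stmt10

open Stmt10 FreeMonoid in
/-- (Poincaré series shape of Corollary 1.12(iii) / Theorem (vi) of the paper.)
Let `ρ_1, …, ρ_r` be nonzero homogeneous elements of `A = 𝔽_p⟨X_1, …, X_d⟩` of degree
`2` and, for each `n ≥ 1`, let `x_n` be a nonzero homogeneous element of degree
`n + 2`, such that the family of all highest terms is combinatorially free.  If `C`
is the two-sided ideal generated by the `ρ_i` and the `x_n`, and
`b n = dim_{𝔽_p}(A^{(n)}/(C ∩ A^{(n)}))`, then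
`(∑ b_n t^n) · (1 − d t + r t² + ∑_{k ≥ 3} t^k) = 1` in `ℤ⟦t⟧`. -/
theorem stmt_10 (p d r : ℕ) (hp : p.Prime) (hd : 1 ≤ d)
    (ρ : Fin r → FA p d) (x : ℕ → FA p d)
    (hatρ : Fin r → Word d) (hatx : ℕ → Word d)
    (hρ0 : ∀ i, ρ i ≠ 0) (hρhom : ∀ i, ρ i ∈ homComponent p d 2)
    (hx0 : ∀ n, 1 ≤ n → x n ≠ 0)
    (hxhom : ∀ n, 1 ≤ n → x n ∈ homComponent p d (n + 2))
    (hhatρ : ∀ i, IsHighestTerm p d (ρ i) (hatρ i))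
    (hhatx : ∀ n, 1 ≤ n → IsHighestTerm p d (x n) (hatx n))
    (hcf : CombFreeFam fun i : Fin r ⊕ {n : ℕ // 1 ≤ n} =>
      Sum.elim (fun j => FreeMonoid.toList (hatρ j))
        (fun n => FreeMonoid.toList (hatx n.1)) i) :
    (PowerSeries.mk fun n =>
        (bcoef p d (twoSidedSpan p d
          ({y | ∃ i : Fin r, y = ρ i} ∪ {y | ∃ n : ℕ, 1 ≤ n ∧ y = x n})) n : ℤ)) *
      (1 - PowerSeries.C (d : ℤ) * PowerSeries.X +
        PowerSeries.C (r : ℤ) * PowerSeries.X ^ 2 +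
        PowerSeries.mk fun k => if 3 ≤ k then 1 else 0) = 1 := by
  haveI : Fact p.Prime := ⟨hp⟩
  classical
  set I : Type := Fin r ⊕ {n : ℕ // 1 ≤ n} with hI
  set F : I → List (Fin d) := fun i =>
    Sum.elim (fun j => FreeMonoid.toList (hatρ j))
      (fun n => FreeMonoid.toList (hatx n.1)) i with hF
  set g : I → FA p d := Sum.elim ρ (fun n => x n.1) with hg
  set G : Set (FA p d) :=
    {y | ∃ i : Fin r, y = ρ i} ∪ {y | ∃ n : ℕ, 1 ≤ n ∧ y = x n} with hG
  -- lengths of the highest terms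
  have hlρ : ∀ j, (toList (hatρ j)).length = 2 := fun j =>
    support_of_mem_homComponent (hρhom j) _ (hhatρ j).1
  have hlx : ∀ n (hn : 1 ≤ n), (toList (hatx n)).length = n + 2 := fun n hn =>
    support_of_mem_homComponent (hxhom n hn) _ (hhatx n hn).1
  have hlen : ∀ i, ∀ w ∈ (g i).coeff.support, (toList w).length = (F i).length := by
    rintro (j | n) w hw
    · rw [hF]
      simp only [Sum.elim_inl]
      rw [hlρ j]
      exact support_of_mem_homComponent (hρhom j) w hw
    · rw [hF]
      simp only [Sum.elim_inr]
      rw [hlx n.1 n.2]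
      exact support_of_mem_homComponent (hxhom n.1 n.2) w hw
  have hht : ∀ i, IsHighestTerm p d (g i) (ofList (F i)) := by
    rintro (j | n)
    · simpa [hF, hg, ofList_toList] using hhatρ j
    · simpa [hF, hg, ofList_toList] using hhatx n.1 n.2
  have hne2 : ∀ i, 2 ≤ (F i).length := by
    rintro (j | n)
    · simp [hF, hlρ j]
    · simp [hF, hlx n.1 n.2]
  have hGmem : ∀ i, g i ∈ G := by
    rintro (j | n)
    · exact Or.inl ⟨j, rfl⟩
    · exact Or.inr ⟨n.1, n.2, rfl⟩
  have hG' : ∀ γ ∈ G, ∃ i, γ = g i := by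
    rintro γ (⟨j, rfl⟩ | ⟨n, hn, rfl⟩)
    · exact ⟨Sum.inl j, rfl⟩
    · exact ⟨Sum.inr ⟨n, hn⟩, rfl⟩
  -- the coefficients are the good-word counts
  have hb : ∀ n, bcoef p d (twoSidedSpan p d G) n = cN F n := fun n =>
    bcoef_eq_card F g hlen hht hcf hGmem hG' n
  -- injectivity of the family of forbidden words
  have hFinj : Function.Injective F := by
    intro i j hij
    by_contra hne
    exact hcf.1 i j hne (hij ▸ List.infix_rfl)
  -- forbidden word counts
  have hcard2 : (forbFS F 2).card = r := by
    have : forbFS F 2 = Finset.image (fun j => toList (hatρ j)) Finset.univ := by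
      ext w
      rw [mem_forbFS, Finset.mem_image]
      constructor
      · rintro ⟨h1, (j | n), rfl⟩
        · exact ⟨j, Finset.mem_univ _, rfl⟩
        · exfalso
          rw [hF] at h1
          simp only [Sum.elim_inr] at h1
          rw [hlx n.1 n.2] at h1
          omega
      · rintro ⟨j, _, rfl⟩
        exact ⟨hlρ j, Sum.inl j, rfl⟩
    rw [this, Finset.card_image_of_injective _ ?_, Finset.card_univ, Fintype.card_fin]
    intro a b hab
    have : F (Sum.inl a) = F (Sum.inl b) := hab
    exact Sum.inl.inj (hFinj this)
  have hcard3 : ∀ k, 3 ≤ k → (forbFS F k).card = 1 := by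
    intro k hk
    have h1 : 1 ≤ k - 2 := by omega
    have : forbFS F k = {toList (hatx (k - 2))} := by
      ext w
      rw [mem_forbFS, Finset.mem_singleton]
      constructor
      · rintro ⟨hlw, (j | n), rfl⟩
        · exfalso
          rw [hF] at hlw
          simp only [Sum.elim_inl] at hlw
          rw [hlρ j] at hlw
          omega
        · rw [hF]
          simp only [Sum.elim_inr]
          have : n.1 = k - 2 := by
            rw [hF] at hlw
            simp only [Sum.elim_inr] at hlw
            rw [hlx n.1 n.2] at hlw
            omega
          rw [this]
      · rintro rfl
        refine ⟨?_, Sum.inr ⟨k - 2, h1⟩, ?_⟩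
        · rw [hlx (k-2) h1]; omega
        · rfl
    rw [this, Finset.card_singleton]
  -- now the power series identity
  set E : PowerSeries ℤ := 1 - PowerSeries.C (d : ℤ) * PowerSeries.X
      + PowerSeries.C (r : ℤ) * PowerSeries.X ^ 2
      + (PowerSeries.mk fun k => if 3 ≤ k then 1 else 0) with hE
  have hEc : ∀ k, PowerSeries.coeff k E =
      if k = 0 then 1 else if k = 1 then -(d : ℤ) else if k = 2 then (r : ℤ) else 1 := by
    intro k
    rw [hE]
    simp only [map_add, map_sub, PowerSeries.coeff_one, PowerSeries.coeff_C_mul,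
      PowerSeries.coeff_X, PowerSeries.coeff_X_pow, PowerSeries.coeff_mk]
    rcases k with _ | _ | _ | k
    · norm_num
    · norm_num
    · norm_num
    · rw [if_neg (by omega : ¬ (k+3 = 1)), if_neg (by omega : ¬ (k+3 = 2)),
        if_neg (by omega : ¬ (k+3 = 0)), if_pos (by omega : 3 ≤ k+3),
        if_neg (by omega : ¬ (k+3 = 0)), if_neg (by omega : ¬ (k+3 = 1)),
        if_neg (by omega : ¬ (k+3 = 2))]
      ring
  refine PowerSeries.ext fun n => ?_
  rw [PowerSeries.coeff_mul, Finset.Nat.sum_antidiagonal_eq_sum_range_succ_mk,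
    PowerSeries.coeff_one]
  simp only [PowerSeries.coeff_mk, hb]
  by_cases hn : n = 0
  · subst hn
    rw [if_pos rfl, Finset.sum_range_one, hEc 0, if_pos rfl, cN_zero hne2]
    norm_num
  · rw [if_neg hn]
    obtain ⟨q, rfl⟩ : ∃ q, n = q + 1 := ⟨n - 1, by omega⟩
    rw [Finset.sum_range_succ, Finset.sum_range_succ]
    have e0 : q + 1 - (q + 1) = 0 := by omega
    have e1 : q + 1 - q = 1 := by omega
    rw [e0, e1, hEc 0, hEc 1, if_pos rfl, if_neg (by omega : ¬ (1 = 0)), if_pos rfl]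
    have piece1 : ∑ k ∈ Finset.range q, (cN F k : ℤ) * PowerSeries.coeff (q+1-k) E
        = ∑ k ∈ Finset.range q, ((forbFS F (q+1-k)).card : ℤ) * (cN F k : ℤ) := by
      refine Finset.sum_congr rfl fun k hk => ?_
      rw [Finset.mem_range] at hk
      rw [hEc]
      rcases eq_or_ne (q+1-k) 2 with h2 | h2
      · rw [if_neg (by omega), if_neg (by omega), if_pos h2, h2, hcard2, mul_comm]
      · rw [if_neg (by omega), if_neg (by omega), if_neg h2,
          hcard3 (q+1-k) (by omega)]
        push_cast
        ring
    rw [piece1]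
    have hrec := count_rec F hcf hne2 (m := q+1) (by omega)
    simp only [Nat.add_sub_cancel] at hrec
    have hreindex : ∑ j ∈ Finset.Icc 2 (q+1), (forbFS F j).card * cN F (q+1-j)
        = ∑ k ∈ Finset.range q, (forbFS F (q+1-k)).card * cN F k := by
      refine Finset.sum_nbij' (fun j => q+1-j) (fun k => q+1-k) ?_ ?_ ?_ ?_ ?_
      · intro a ha
        rw [Finset.mem_Icc] at ha
        rw [Finset.mem_range]
        omega
      · intro a ha
        rw [Finset.mem_range] at ha
        rw [Finset.mem_Icc]
        omega
      · intro a ha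
        rw [Finset.mem_Icc] at ha
        omega
      · intro a ha
        rw [Finset.mem_range] at ha
        omega
      · intro a ha
        rw [Finset.mem_Icc] at ha
        have : q + 1 - (q + 1 - a) = a := by omega
        rw [this]
    rw [hreindex] at hrec
    have hrecZ : (d : ℤ) * (cN F q : ℤ)
        = (cN F (q+1) : ℤ) + ∑ k ∈ Finset.range q, ((forbFS F (q+1-k)).card : ℤ) * (cN F k : ℤ) := by
      exact_mod_cast hrec
    linarith [hrecZ]
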